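/- For any u ∈ 𝔻, s ∈ ℝ, and h ∈ ℂ with (s,h) ≠ (0,0), the limit as Δt → 0⁺ of d_{H^∞}(f_{ξ,u}, f_{ξ+sΔt, u+hΔt})/Δt exists and equals F(u, s, h) := (2|h| + |2·Im(ū·h) − s·(1−|u|²)|)/(1−|u|²). -/

import Mathlib

open Complex Filter

noncomputable section

def unitDisk : Set ℂ := {z : ℂ | ‖z‖ < 1}

noncomputable def autMap (ξ : ℝ) (u z : ℂ) : ℂ :=
  Complex.exp (Complex.I * ξ) * ((z - u) / (1 - (starRingEnd ℂ) u * z))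

noncomputable def dHinf (φ ψ : ℂ → ℂ) : ℝ :=
  ⨆ z : unitDisk, ‖φ z - ψ z‖

/-!
Differentiating `t ↦ autMap (ξ + s t) (u + h t)` at `t = 0` gives a holomorphic vector field
which, in the coordinate `w = (z - u) / (1 - ū z)`, is the infinitesimal automorphism
`α + iβ w - ᾱ w²` with `α = -h / (1 - |u|²)` and `β = s - 2 Im(ū h) / (1 - |u|²)`.
On `|w| = 1` its modulus is `|β - 2 Im(ᾱ w)|`, so its sup over the disc is `2|α| + |β|`, the
claimed value. The expansion `autMap (ξ + s t) (u + h t) = autMap ξ u + t · (field) + O(t²)` is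
uniform on the disc because all denominators stay at distance `≥ (1 - |u|) / 2` from `0`, so
`d_{H^∞}` is `t (2|α| + |β|) + O(t²)`.
-/

open scoped ComplexConjugate Topology

lemma add_mul_div_add_mul_sub_div {K : Type*} [Field K] {A B C D t : K} (hC : C ≠ 0)
    (hCt : C + D * t ≠ 0) :
    (A + B * t) / (C + D * t) - A / C = t * (B * C - A * D) / (C * (C + D * t)) := by
  rw [div_sub_div _ _ hCt hC]
  ring

lemma add_mul_div_add_mul_sub_div_sub {K : Type*} [Field K] {A B C D t : K} (hC : C ≠ 0)
    (hCt : C + D * t ≠ 0) :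
    (A + B * t) / (C + D * t) - A / C - t * ((B * C - A * D) / C ^ 2)
      = -(t ^ 2 * D * (B * C - A * D)) / (C ^ 2 * (C + D * t)) := by
  rw [add_mul_div_add_mul_sub_div hC hCt, mul_div_assoc', div_sub_div _ _ (mul_ne_zero hC hCt)
    (pow_ne_zero 2 hC), div_eq_div_iff (by positivity) (by positivity)]
  ring

lemma norm_exp_I_mul_ofReal_sub_one_sub_le (x : ℝ) : ‖exp (I * x) - 1 - I * x‖ ≤ 2 * x ^ 2 := by
  rcases le_or_gt |x| 1 with hx | hx
  · have : ‖I * x‖ ≤ 1 := by simpa using hx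
    calc ‖exp (I * x) - 1 - I * x‖ ≤ ‖I * x‖ ^ 2 := norm_exp_sub_one_sub_id_le this
      _ = x ^ 2 := by simp
      _ ≤ 2 * x ^ 2 := by nlinarith [sq_nonneg x]
  · calc ‖exp (I * x) - 1 - I * x‖ ≤ ‖exp (I * x) - 1‖ + ‖I * x‖ := norm_sub_le _ _
      _ ≤ |x| + |x| := by
        gcongr
        · simpa using Real.norm_exp_I_mul_ofReal_sub_one_le (x := x)
        · simp
      _ ≤ 2 * x ^ 2 := by nlinarith [sq_abs x]

lemma abs_iSup_norm_sub_iSup_norm_le {ι E : Type*} [Nonempty ι] [SeminormedAddCommGroup E]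
    {f g : ι → E} {ε : ℝ} (hg : BddAbove (Set.range fun i => ‖g i‖))
    (hfg : ∀ i, ‖f i - g i‖ ≤ ε) : |(⨆ i, ‖f i‖) - ⨆ i, ‖g i‖| ≤ ε := by
  have hf_le : ∀ i, ‖f i‖ ≤ ‖g i‖ + ε := fun i => by
    linarith [norm_sub_norm_le (f i) (g i), hfg i]
  have hg_le : ∀ i, ‖g i‖ ≤ ‖f i‖ + ε := fun i => by
    linarith [norm_sub_norm_le (g i) (f i), norm_sub_rev (g i) (f i), hfg i]
  have hf : BddAbove (Set.range fun i => ‖f i‖) := by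
    obtain ⟨M, hM⟩ := hg
    exact ⟨M + ε, Set.forall_mem_range.2 fun i => (hf_le i).trans (by gcongr; exact hM ⟨i, rfl⟩)⟩
  rw [abs_sub_le_iff, sub_le_iff_le_add, sub_le_iff_le_add]
  constructor
  · exact ciSup_le fun i => (hf_le i).trans (by gcongr; exact le_ciSup hg i) |>.trans_eq
      (add_comm _ _)
  · exact ciSup_le fun i => (hg_le i).trans (by gcongr; exact le_ciSup hf i) |>.trans_eq
      (add_comm _ _)

lemma tendsto_nhdsGT_zero_of_abs_sub_le {f : ℝ → ℝ} {L K : ℝ}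
    (h : ∀ᶠ t in 𝓝[>] 0, |f t - L| ≤ K * t) : Tendsto f (𝓝[>] 0) (𝓝 L) := by
  have hK : Tendsto (fun t => K * t) (𝓝[>] 0) (𝓝 0) := by
    simpa using ((continuous_const_mul K).tendsto 0).mono_left nhdsWithin_le_nhds
  exact tendsto_iff_dist_tendsto_zero.2 <|
    squeeze_zero' (Eventually.of_forall fun _ => dist_nonneg) (h.mono fun t ht => by
      rwa [Real.dist_eq]) hK

def blaschke (u z : ℂ) : ℂ := (z - u) / (1 - conj u * z)

lemma normSq_one_sub_conj_mul_sub_normSq_sub (u z : ℂ) :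
    normSq (1 - conj u * z) - normSq (z - u) = (1 - normSq u) * (1 - normSq z) := by
  simp only [normSq_apply, sub_re, sub_im, mul_re, mul_im, conj_re, conj_im, one_re, one_im]
  ring

lemma one_sub_norm_le_norm_one_sub_conj_mul {u z : ℂ} (hz : ‖z‖ ≤ 1) :
    1 - ‖u‖ ≤ ‖1 - conj u * z‖ := by
  have : ‖conj u * z‖ ≤ ‖u‖ := by
    simpa using mul_le_of_le_one_right (norm_nonneg u) hz
  have := norm_sub_norm_le (1 : ℂ) (conj u * z)
  rw [norm_one] at this
  linarith

lemma one_sub_conj_mul_ne_zero {u z : ℂ} (hu : ‖u‖ < 1) (hz : ‖z‖ ≤ 1) :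
    1 - conj u * z ≠ 0 :=
  norm_pos_iff.mp <| (sub_pos.mpr hu).trans_le (one_sub_norm_le_norm_one_sub_conj_mul hz)

lemma norm_blaschke_lt_one {u z : ℂ} (hu : ‖u‖ < 1) (hz : ‖z‖ < 1) : ‖blaschke u z‖ < 1 := by
  have hC := one_sub_conj_mul_ne_zero hu hz.le
  rw [blaschke, norm_div, div_lt_one (norm_pos_iff.mpr hC), ← sq_lt_sq₀ (norm_nonneg _)
    (norm_nonneg _), ← normSq_eq_norm_sq, ← normSq_eq_norm_sq, ← sub_pos,
    normSq_one_sub_conj_mul_sub_normSq_sub, normSq_eq_norm_sq, normSq_eq_norm_sq]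
  have := pow_lt_one₀ (norm_nonneg u) hu two_ne_zero
  have := pow_lt_one₀ (norm_nonneg z) hz two_ne_zero
  nlinarith

lemma blaschke_blaschke_neg {u w : ℂ} (hu : ‖u‖ < 1) (hw : ‖w‖ < 1) :
    blaschke u (blaschke (-u) w) = w := by
  have h₁ : 1 + conj u * w ≠ 0 := by
    simpa using one_sub_conj_mul_ne_zero (u := -u) (by simpa) hw.le
  have hu' : 1 - u * conj u ≠ 0 := by
    rw [mul_conj', ← ofReal_pow, ← ofReal_one, ← ofReal_sub, ofReal_ne_zero, sub_ne_zero]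
    exact (pow_lt_one₀ (norm_nonneg u) hu two_ne_zero).ne'
  have hden :
      1 - conj u * ((w + u) / (1 + conj u * w)) = (1 - u * conj u) / (1 + conj u * w) := by
    field_simp
    ring
  have hnum : (w + u) / (1 + conj u * w) - u = w * (1 - u * conj u) / (1 + conj u * w) := by
    rw [eq_div_iff h₁, sub_mul, div_mul_cancel₀ _ h₁]
    ring
  have hneg : blaschke (-u) w = (w + u) / (1 + conj u * w) := by
    simp [blaschke, sub_eq_add_neg, add_comm]
  rw [hneg, blaschke, hden, hnum, div_div_div_cancel_right₀ h₁, mul_div_cancel_right₀ _ hu']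

/-- The infinitesimal automorphisms of `𝔻` (the Lie algebra `𝔰𝔲(1,1)` as vector fields). -/
def autField (α : ℂ) (β : ℝ) (w : ℂ) : ℂ := α + I * β * w - conj α * w ^ 2

lemma norm_autField_le (α : ℂ) (β : ℝ) {w : ℂ} (hw : ‖w‖ ≤ 1) :
    ‖autField α β w‖ ≤ 2 * ‖α‖ + |β| := by
  have hw2 : ‖w‖ ^ 2 ≤ 1 := pow_le_one₀ (norm_nonneg w) hw
  calc ‖autField α β w‖ ≤ ‖α‖ + ‖I * β * w‖ + ‖conj α * w ^ 2‖ :=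
        norm_sub_le_of_le (norm_add_le _ _) le_rfl
    _ = ‖α‖ + |β| * ‖w‖ + ‖α‖ * ‖w‖ ^ 2 := by simp
    _ ≤ ‖α‖ + |β| * 1 + ‖α‖ * 1 := by gcongr
    _ = 2 * ‖α‖ + |β| := by ring

lemma norm_autField_ofReal_mul {α w₀ : ℂ} (β c r : ℝ) (hw₀ : ‖w₀‖ = 1)
    (hα : conj α * w₀ = I * (c * ‖α‖)) :
    ‖autField α β (r * w₀)‖ = |β * r - c * ‖α‖ * (1 + r ^ 2)| := by
  have hw : w₀ * conj w₀ = 1 := by rw [mul_conj', hw₀]; simp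
  have hα' : α * conj w₀ = -I * (c * ‖α‖) := by simpa using congrArg conj hα
  have : autField α β (r * w₀) = w₀ * I * (β * r - c * ‖α‖ * (1 + r ^ 2) : ℝ) := by
    unfold autField
    push_cast
    linear_combination (-α) * hw + w₀ * hα' - (r : ℂ) ^ 2 * w₀ * hα
  rw [this, norm_mul, norm_mul, hw₀, norm_I, norm_real, Real.norm_eq_abs, one_mul, one_mul]

lemma exists_le_norm_autField (α : ℂ) (β : ℝ) :
    ∃ w₀ : ℂ, ‖w₀‖ = 1 ∧ ∀ r : ℝ, 0 ≤ r → r * (2 * ‖α‖ + |β|) ≤ ‖autField α β (r * w₀)‖ := by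
  obtain ⟨c, hc, hcβ⟩ : ∃ c : ℝ, |c| = 1 ∧ c * β = -|β| := by
    rcases le_or_gt 0 β with hβ | hβ
    · exact ⟨-1, by simp, by simp [abs_of_nonneg hβ]⟩
    · exact ⟨1, by simp, by simp [abs_of_neg hβ]⟩
  obtain ⟨w₀, hw₀, hα⟩ : ∃ w₀ : ℂ, ‖w₀‖ = 1 ∧ conj α * w₀ = I * (c * ‖α‖) := by
    rcases eq_or_ne α 0 with rfl | hα
    · exact ⟨1, by simp, by simp⟩
    · have hα' : (‖α‖ : ℂ) ≠ 0 := by exact_mod_cast norm_ne_zero_iff.mpr hα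
      refine ⟨I * c * α / ‖α‖, ?_, ?_⟩
      · simp [hc, hα]
      · rw [mul_div_assoc', div_eq_iff hα', mul_left_comm, conj_mul']
        ring
  -- with `c = -sign β` the two terms of `|β r - c ‖α‖ (1 + r²)|` add up; then use `1 + r² ≥ 2r`
  refine ⟨w₀, hw₀, fun r hr => ?_⟩
  have hc2 : c ^ 2 = 1 := by rw [← sq_abs, hc, one_pow]
  have hsplit : β * r - c * ‖α‖ * (1 + r ^ 2) = -c * (|β| * r + ‖α‖ * (1 + r ^ 2)) := by
    linear_combination (c * r) * hcβ - β * r * hc2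
  rw [norm_autField_ofReal_mul β c r hw₀ hα, hsplit, abs_mul, abs_neg, hc, one_mul,
    abs_of_nonneg (a := |β| * r + ‖α‖ * (1 + r ^ 2)) (by positivity)]
  nlinarith [mul_nonneg (norm_nonneg α) (sq_nonneg (r - 1))]

instance : Nonempty unitDisk := ⟨⟨0, by simp [unitDisk]⟩⟩

lemma iSup_norm_autField_blaschke {u : ℂ} (hu : ‖u‖ < 1) (α : ℂ) (β : ℝ) :
    ⨆ z : unitDisk, ‖autField α β (blaschke u z)‖ = 2 * ‖α‖ + |β| := by
  have hle : ∀ z : unitDisk, ‖autField α β (blaschke u z)‖ ≤ 2 * ‖α‖ + |β| := fun z =>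
    norm_autField_le α β (norm_blaschke_lt_one hu z.2).le
  refine le_antisymm (ciSup_le hle) ?_
  obtain ⟨w₀, hw₀, hge⟩ := exists_le_norm_autField α β
  have hlim : Tendsto (fun r : ℝ => r * (2 * ‖α‖ + |β|)) (𝓝[<] 1) (𝓝 (2 * ‖α‖ + |β|)) := by
    simpa using ((continuous_mul_const (2 * ‖α‖ + |β|)).tendsto 1).mono_left nhdsWithin_le_nhds
  refine le_of_tendsto hlim (eventually_of_mem (Ioo_mem_nhdsLT one_pos) fun r hr => ?_)
  have hw : ‖(r : ℂ) * w₀‖ < 1 := by simpa [norm_mul, hw₀, abs_of_pos hr.1] using hr.2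
  have hz : ‖blaschke (-u) (r * w₀)‖ < 1 := norm_blaschke_lt_one (by simpa) hw
  calc r * (2 * ‖α‖ + |β|) ≤ ‖autField α β (r * w₀)‖ := hge r hr.1.le
    _ = ‖autField α β (blaschke u (blaschke (-u) (r * w₀)))‖ := by
      rw [blaschke_blaschke_neg hu hw]
    _ ≤ ⨆ z : unitDisk, ‖autField α β (blaschke u z)‖ :=
      le_ciSup ⟨_, Set.forall_mem_range.2 hle⟩ (⟨_, hz⟩ : unitDisk)

def blaschkeDeriv (u h z : ℂ) : ℂ :=
  (-h * (1 - conj u * z) + conj h * z * (z - u)) / (1 - conj u * z) ^ 2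

section Perturbation

variable {u h z : ℂ} {t : ℝ}

lemma blaschke_add_mul_ofReal (u h z : ℂ) (t : ℝ) :
    blaschke (u + h * t) z = ((z - u) + -h * t) / ((1 - conj u * z) + -(conj h * z) * t) := by
  simp only [blaschke, map_add, map_mul, conj_ofReal]
  ring_nf

lemma norm_numerator_blaschkeDeriv_le (hu : ‖u‖ ≤ 1) (hz : ‖z‖ ≤ 1) :
    ‖-h * (1 - conj u * z) + conj h * z * (z - u)‖ ≤ 4 * ‖h‖ := by
  have hC : ‖1 - conj u * z‖ ≤ 2 := by
    calc ‖1 - conj u * z‖ ≤ 1 + ‖u‖ * ‖z‖ := by simpa using norm_sub_le (1 : ℂ) (conj u * z)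
      _ ≤ 2 := by nlinarith [norm_nonneg u, norm_nonneg z]
  have hA : ‖z - u‖ ≤ 2 := by linarith [norm_sub_le z u]
  calc ‖-h * (1 - conj u * z) + conj h * z * (z - u)‖
      ≤ ‖h‖ * ‖1 - conj u * z‖ + ‖h‖ * ‖z‖ * ‖z - u‖ := by
        simpa [norm_mul] using norm_add_le (-h * (1 - conj u * z)) (conj h * z * (z - u))
    _ ≤ ‖h‖ * 2 + ‖h‖ * 1 * 2 := by gcongr
    _ = 4 * ‖h‖ := by ring

lemma norm_one_sub_conj_mul_add_mul_ge (hz : ‖z‖ ≤ 1) (ht : 0 ≤ t)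
    (hth : t * ‖h‖ ≤ (1 - ‖u‖) / 2) :
    (1 - ‖u‖) / 2 ≤ ‖(1 - conj u * z) + -(conj h * z) * t‖ := by
  have hD : ‖-(conj h * z) * t‖ ≤ t * ‖h‖ := by
    simpa [abs_of_nonneg ht, mul_comm] using
      mul_le_mul_of_nonneg_left (mul_le_of_le_one_right (norm_nonneg h) hz) ht
  have := norm_sub_norm_le (1 - conj u * z) (-(-(conj h * z) * t))
  rw [norm_neg, sub_neg_eq_add] at this
  linarith [one_sub_norm_le_norm_one_sub_conj_mul (u := u) hz]

lemma norm_blaschke_add_mul_sub_le (hu : ‖u‖ < 1) (hz : ‖z‖ ≤ 1) (ht : 0 ≤ t)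
    (hth : t * ‖h‖ ≤ (1 - ‖u‖) / 2) :
    ‖blaschke (u + h * t) z - blaschke u z‖ ≤ 8 * ‖h‖ / (1 - ‖u‖) ^ 2 * t := by
  have hm : 0 < 1 - ‖u‖ := sub_pos.mpr hu
  have hC := one_sub_norm_le_norm_one_sub_conj_mul (u := u) hz
  have hCt := norm_one_sub_conj_mul_add_mul_ge hz ht hth
  rw [blaschke_add_mul_ofReal, blaschke, add_mul_div_add_mul_sub_div
    (norm_pos_iff.mp (hm.trans_le hC)) (norm_pos_iff.mp ((half_pos hm).trans_le hCt))]
  calc _ = t * ‖-h * (1 - conj u * z) + conj h * z * (z - u)‖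
        / (‖1 - conj u * z‖ * ‖1 - conj u * z + -(conj h * z) * t‖) := by
        simp [abs_of_nonneg ht, mul_comm]
    _ ≤ t * (4 * ‖h‖) / ((1 - ‖u‖) * ((1 - ‖u‖) / 2)) := by
        gcongr
        exact norm_numerator_blaschkeDeriv_le hu.le hz
    _ = 8 * ‖h‖ / (1 - ‖u‖) ^ 2 * t := by field_simp; ring

lemma norm_blaschke_add_mul_sub_sub_le (hu : ‖u‖ < 1) (hz : ‖z‖ ≤ 1) (ht : 0 ≤ t)
    (hth : t * ‖h‖ ≤ (1 - ‖u‖) / 2) :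
    ‖blaschke (u + h * t) z - blaschke u z - t * blaschkeDeriv u h z‖
      ≤ 8 * ‖h‖ ^ 2 / (1 - ‖u‖) ^ 3 * t ^ 2 := by
  have hm : 0 < 1 - ‖u‖ := sub_pos.mpr hu
  have hC := one_sub_norm_le_norm_one_sub_conj_mul (u := u) hz
  have hCt := norm_one_sub_conj_mul_add_mul_ge hz ht hth
  have hnum : -h * (1 - conj u * z) + conj h * z * (z - u)
      = -h * (1 - conj u * z) - (z - u) * -(conj h * z) := by ring
  rw [blaschke_add_mul_ofReal, blaschke, blaschkeDeriv, hnum, add_mul_div_add_mul_sub_div_sub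
    (norm_pos_iff.mp (hm.trans_le hC)) (norm_pos_iff.mp ((half_pos hm).trans_le hCt)), ← hnum]
  calc _ = t ^ 2 * (‖h‖ * ‖z‖) * ‖-h * (1 - conj u * z) + conj h * z * (z - u)‖
        / (‖1 - conj u * z‖ ^ 2 * ‖1 - conj u * z + -(conj h * z) * t‖) := by
        simp
    _ ≤ t ^ 2 * (‖h‖ * 1) * (4 * ‖h‖) / ((1 - ‖u‖) ^ 2 * ((1 - ‖u‖) / 2)) := by
        gcongr
        exact norm_numerator_blaschkeDeriv_le hu.le hz
    _ = 8 * ‖h‖ ^ 2 / (1 - ‖u‖) ^ 3 * t ^ 2 := by field_simp; ring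

end Perturbation

/-- The `t`-derivative of `autMap (ξ + s t) (u + h t) z` at `t = 0`, in the coordinate
`w = blaschke u z` (see `I_mul_blaschke_add_blaschkeDeriv_eq_autField`). -/
def autGenerator (ξ : ℝ) (u : ℂ) (s : ℝ) (h z : ℂ) : ℂ :=
  exp (I * ξ) * autField (-h / (1 - ‖u‖ ^ 2 : ℝ)) (s - 2 * (conj u * h).im / (1 - ‖u‖ ^ 2))
    (blaschke u z)

lemma I_mul_blaschke_add_blaschkeDeriv_eq_autField {u z : ℂ} (hu : ‖u‖ < 1) (hz : ‖z‖ ≤ 1)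
    (s : ℝ) (h : ℂ) :
    I * s * blaschke u z + blaschkeDeriv u h z
      = autField (-h / (1 - ‖u‖ ^ 2 : ℝ)) (s - 2 * (conj u * h).im / (1 - ‖u‖ ^ 2))
          (blaschke u z) := by
  have hC := one_sub_conj_mul_ne_zero hu hz
  have hC' : 1 - z * conj u ≠ 0 := by rwa [mul_comm]
  have hk : ((1 - ‖u‖ ^ 2 : ℝ) : ℂ) = 1 - u * conj u := by rw [mul_conj']; push_cast; ring
  have hk0 : 1 - u * conj u ≠ 0 := by
    rw [← hk, ofReal_ne_zero, sub_ne_zero]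
    exact (pow_lt_one₀ (norm_nonneg u) hu two_ne_zero).ne'
  have him : ((2 * (conj u * h).im : ℝ) : ℂ) = -I * (conj u * h - u * conj h) := by
    rw [show conj u * h - u * conj h = conj u * h - conj (conj u * h) by simp, sub_conj]
    linear_combination ((2 * (conj u * h).im : ℝ) : ℂ) * I_sq
  have hkc : conj (1 - u * conj u) = 1 - u * conj u := by simp [mul_comm]
  simp only [autField, blaschke, blaschkeDeriv, map_div₀, map_neg, ofReal_sub, ofReal_div, hk,
    hkc, him]
  field_simp
  ring_nf
  rw [I_sq]
  ring

lemma autMap_add_mul_sub_sub_autGenerator {u z : ℂ} (hu : ‖u‖ < 1) (hz : ‖z‖ ≤ 1)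
    (ξ s : ℝ) (h : ℂ) (t : ℝ) :
    autMap (ξ + s * t) (u + h * t) z - autMap ξ u z - t * autGenerator ξ u s h z
      = exp (I * ξ) * ((exp (I * (s * t : ℝ)) - 1 - I * (s * t : ℝ)) * blaschke (u + h * t) z
        + I * (s * t : ℝ) * (blaschke (u + h * t) z - blaschke u z)
        + (blaschke (u + h * t) z - blaschke u z - t * blaschkeDeriv u h z)) := by
  have hexp : exp (I * (ξ + s * t : ℝ)) = exp (I * ξ) * exp (I * (s * t : ℝ)) := by
    rw [← exp_add]; push_cast; ring_nf
  rw [autGenerator, ← I_mul_blaschke_add_blaschkeDeriv_eq_autField hu hz]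
  change exp (I * (ξ + s * t : ℝ)) * blaschke (u + h * t) z - exp (I * ξ) * blaschke u z - _ = _
  rw [hexp]
  push_cast
  ring

lemma norm_autMap_add_mul_sub_sub_autGenerator_le {u z h : ℂ} {t : ℝ} (hu : ‖u‖ < 1)
    (hz : ‖z‖ < 1) (ht : 0 ≤ t) (hth : t * ‖h‖ ≤ (1 - ‖u‖) / 2) (ξ s : ℝ) :
    ‖autMap (ξ + s * t) (u + h * t) z - autMap ξ u z - t * autGenerator ξ u s h z‖
      ≤ (2 * s ^ 2 + |s| * (8 * ‖h‖ / (1 - ‖u‖) ^ 2) + 8 * ‖h‖ ^ 2 / (1 - ‖u‖) ^ 3) * t ^ 2 := by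
  have hv : ‖u + h * t‖ < 1 := by
    calc ‖u + h * t‖ ≤ ‖u‖ + t * ‖h‖ := by
          simpa [abs_of_nonneg ht, mul_comm] using norm_add_le u (h * t)
      _ < 1 := by linarith
  have hP : ‖blaschke (u + h * t) z‖ ≤ 1 := (norm_blaschke_lt_one hv hz).le
  have hΔ := norm_blaschke_add_mul_sub_le hu hz.le ht hth
  have hR := norm_blaschke_add_mul_sub_sub_le hu hz.le ht hth
  have hE := norm_exp_I_mul_ofReal_sub_one_sub_le (s * t)
  rw [autMap_add_mul_sub_sub_autGenerator hu hz.le, norm_mul, norm_exp_I_mul_ofReal, one_mul]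
  refine (norm_add₃_le ..).trans ?_
  rw [norm_mul, norm_mul, norm_mul, norm_I, one_mul, norm_real, Real.norm_eq_abs, abs_mul,
    abs_of_nonneg ht]
  calc _ ≤ 2 * (s * t) ^ 2 * 1 + |s| * t * (8 * ‖h‖ / (1 - ‖u‖) ^ 2 * t)
        + 8 * ‖h‖ ^ 2 / (1 - ‖u‖) ^ 3 * t ^ 2 := by gcongr
    _ = _ := by ring

lemma iSup_norm_autGenerator {u : ℂ} (hu : ‖u‖ < 1) (ξ s : ℝ) (h : ℂ) :
    ⨆ z : unitDisk, ‖autGenerator ξ u s h z‖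
      = (2 * ‖h‖ + |2 * (conj u * h).im - s * (1 - ‖u‖ ^ 2)|) / (1 - ‖u‖ ^ 2) := by
  have hk : 0 < 1 - ‖u‖ ^ 2 := sub_pos.mpr (pow_lt_one₀ (norm_nonneg u) hu two_ne_zero)
  simp only [autGenerator, norm_mul, norm_exp_I_mul_ofReal, one_mul]
  rw [iSup_norm_autField_blaschke hu, norm_div, norm_neg, norm_real, Real.norm_of_nonneg hk.le,
    abs_sub_comm, show 2 * (conj u * h).im / (1 - ‖u‖ ^ 2) - s
      = (2 * (conj u * h).im - s * (1 - ‖u‖ ^ 2)) / (1 - ‖u‖ ^ 2) by field_simp,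
    abs_div, abs_of_pos hk]
  ring

lemma exists_abs_dHinf_sub_le {u : ℂ} (hu : ‖u‖ < 1) (ξ s : ℝ) (h : ℂ) :
    ∃ K : ℝ, ∀ t : ℝ, 0 ≤ t → t * ‖h‖ ≤ (1 - ‖u‖) / 2 →
      |dHinf (autMap ξ u) (autMap (ξ + s * t) (u + h * t))
        - t * ⨆ z : unitDisk, ‖autGenerator ξ u s h z‖| ≤ K * t ^ 2 := by
  refine ⟨2 * s ^ 2 + |s| * (8 * ‖h‖ / (1 - ‖u‖) ^ 2) + 8 * ‖h‖ ^ 2 / (1 - ‖u‖) ^ 3,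
    fun t ht hth => ?_⟩
  obtain ⟨M, hM⟩ : BddAbove (Set.range fun z : unitDisk => ‖autGenerator ξ u s h z‖) :=
    ⟨_, Set.forall_mem_range.2 fun z => by
      simpa [autGenerator] using norm_autField_le _ _ (norm_blaschke_lt_one hu z.2).le⟩
  have hnorm : ∀ z : unitDisk, ‖-(t * autGenerator ξ u s h z)‖ = t * ‖autGenerator ξ u s h z‖ :=
    fun z => by rw [norm_neg, norm_mul, norm_real, Real.norm_of_nonneg ht]
  have hbdd : BddAbove (Set.range fun z : unitDisk => ‖-(t * autGenerator ξ u s h z)‖) :=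
    ⟨t * M, Set.forall_mem_range.2 fun z => by
      rw [hnorm]; exact mul_le_mul_of_nonneg_left (hM ⟨z, rfl⟩) ht⟩
  have key := abs_iSup_norm_sub_iSup_norm_le hbdd
    (f := fun z : unitDisk => autMap ξ u z - autMap (ξ + s * t) (u + h * t) z) fun z => by
      rw [sub_neg_eq_add, ← norm_neg, neg_add', neg_sub]
      exact norm_autMap_add_mul_sub_sub_autGenerator_le hu z.2 ht hth ξ s
  simp only [hnorm, ← Real.mul_iSup_of_nonneg ht] at key
  exact key

theorem finsler_limit_general (u : ℂ) (hu : u ∈ unitDisk) (s : ℝ) (h : ℂ) (ξ : ℝ) :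
    Filter.Tendsto
      (fun t : ℝ => dHinf (autMap ξ u) (autMap (ξ + s * t) (u + h * t)) / t)
      (nhdsWithin 0 (Set.Ioi 0))
      (nhds ((2 * ‖h‖
          + |2 * ((starRingEnd ℂ) u * h).im - s * (1 - ‖u‖ ^ 2)|)
        / (1 - ‖u‖ ^ 2))) := by
  have hu : ‖u‖ < 1 := hu
  obtain ⟨K, hK⟩ := exists_abs_dHinf_sub_le hu ξ s h
  rw [iSup_norm_autGenerator hu] at hK
  have hsmall : ∀ᶠ t in 𝓝[>] 0, t * ‖h‖ < (1 - ‖u‖) / 2 :=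
    nhdsWithin_le_nhds <| ((continuous_mul_const ‖h‖).tendsto 0).eventually_lt_const
      (by simpa using hu)
  refine tendsto_nhdsGT_zero_of_abs_sub_le (K := K) ?_
  filter_upwards [self_mem_nhdsWithin, hsmall] with t (ht : 0 < t) hth
  rw [div_sub' ht.ne', abs_div, abs_of_pos ht, div_le_iff₀ ht]
  linarith [hK t ht.le hth.le]

theorem finsler_limit (u : ℂ) (hu : u ∈ unitDisk) (s : ℝ) (h : ℂ)
    (hne : (s, h) ≠ (0, 0)) (ξ : ℝ) :
    Filter.Tendsto
      (fun t : ℝ => dHinf (autMap ξ u) (autMap (ξ + s * t) (u + h * t)) / t)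
      (nhdsWithin 0 (Set.Ioi 0))
      (nhds ((2 * ‖h‖
          + |2 * ((starRingEnd ℂ) u * h).im - s * (1 - ‖u‖ ^ 2)|)
        / (1 - ‖u‖ ^ 2))) :=
  finsler_limit_general u hu s h ξ
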